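/- Let h > 0 and let β* ∈ (0,3) satisfy F(β*, h) = 0. Set c₀ = tanh(h)^{1/2}, γ(k) = (k²+β*)^{1/4}·tanh(h·(k²+β*)^{1/2})^{1/2} for k ∈ ℝ, and σ = c₀ − γ(1). Then the set of integers k with c₀·k − γ(k) = σ is exactly {1}, and the set of integers k with c₀·k + γ(k) = σ is exactly {−2}. (Hence iσ is the double eigenvalue λ⁰₊(−2,β*) = λ⁰₋(1,β*), and no other integer Fourier mode contributes.) -/
import Mathlib

noncomputable def F (β h : ℝ) : ℝ :=
  3 * Real.sqrt (Real.tanh h)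
    - (1 + β) ^ ((1 : ℝ) / 4) * Real.sqrt (Real.tanh (h * Real.sqrt (1 + β)))
    - (4 + β) ^ ((1 : ℝ) / 4) * Real.sqrt (Real.tanh (h * Real.sqrt (4 + β)))

lemma my_sinh_lt_mul_cosh {x : ℝ} (hx : 0 < x) : Real.sinh x < x * Real.cosh x := by
  have key : StrictMonoOn (fun y : ℝ => y * Real.cosh y - Real.sinh y) (Set.Ici 0) := by
    apply strictMonoOn_of_deriv_pos (convex_Ici 0)
    · exact (((continuous_id.mul Real.continuous_cosh).sub Real.continuous_sinh)).continuousOn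
    · intro y hy
      rw [interior_Ici, Set.mem_Ioi] at hy
      have h1 : HasDerivAt (fun y : ℝ => y * Real.cosh y - Real.sinh y)
          (1 * Real.cosh y + y * Real.sinh y - Real.cosh y) y :=
        ((hasDerivAt_id y).mul (Real.hasDerivAt_cosh y)).sub (Real.hasDerivAt_sinh y)
      rw [h1.deriv]
      have h2 : 0 < Real.sinh y := Real.sinh_pos_iff.2 hy
      nlinarith only [h2, hy]
  have h3 := key (Set.self_mem_Ici) (Set.mem_Ici.2 hx.le) hx
  simpa using h3

lemma my_mul_sinh_lt {A B : ℝ} (hB : 0 < B) (hBA : B < A) :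
    A * Real.sinh B < B * Real.sinh A := by
  have h1 : Real.sinh A = Real.sinh B * Real.cosh (A - B) + Real.cosh B * Real.sinh (A - B) := by
    rw [← Real.sinh_add]; ring_nf
  have h2 : Real.sinh B < B * Real.cosh B := my_sinh_lt_mul_cosh hB
  have h3 : A - B < Real.sinh (A - B) := Real.self_lt_sinh_iff.2 (by linarith)
  have h4 : (1:ℝ) ≤ Real.cosh (A - B) := Real.one_le_cosh _
  have h5 : 0 < Real.sinh B := Real.sinh_pos_iff.2 hB
  have h6 : 0 < Real.cosh B := Real.cosh_pos B
  nlinarith only [h1, h2, h3, h4, h5, h6, hB, hBA,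
    mul_pos (sub_pos.2 hBA) (sub_pos.2 h2), mul_nonneg h5.le (sub_nonneg.2 h4),
    mul_pos (mul_pos hB h6) (sub_pos.2 h3)]

lemma my_tanh_star {u v : ℝ} (hu : 0 < u) (huv : u < v) :
    u * Real.tanh v < v * Real.tanh u := by
  rw [Real.tanh_eq_sinh_div_cosh, Real.tanh_eq_sinh_div_cosh]
  rw [mul_div_assoc', mul_div_assoc', div_lt_div_iff₀ (Real.cosh_pos v) (Real.cosh_pos u)]
  have key := my_mul_sinh_lt (sub_pos.2 huv) (show v - u < v + u by linarith)
  have e1 : Real.sinh (v + u) = Real.sinh v * Real.cosh u + Real.cosh v * Real.sinh u :=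
    Real.sinh_add v u
  have e2 : Real.sinh (v - u) = Real.sinh v * Real.cosh u - Real.cosh v * Real.sinh u :=
    Real.sinh_sub v u
  rw [e1, e2] at key
  nlinarith only [key]

lemma my_tanh_strict_mono {u v : ℝ} (huv : u < v) : Real.tanh u < Real.tanh v := by
  rw [Real.tanh_eq_sinh_div_cosh, Real.tanh_eq_sinh_div_cosh,
    div_lt_div_iff₀ (Real.cosh_pos u) (Real.cosh_pos v)]
  have h1 : 0 < Real.sinh (v - u) := Real.sinh_pos_iff.2 (by linarith)
  have e : Real.sinh (v - u) = Real.sinh v * Real.cosh u - Real.cosh v * Real.sinh u :=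
    Real.sinh_sub v u
  rw [e] at h1
  nlinarith only [h1]

lemma my_tanh_pos {x : ℝ} (hx : 0 < x) : 0 < Real.tanh x := by
  have := my_tanh_strict_mono hx
  simpa [Real.tanh_zero] using this

lemma my_sqrt_add_le (a b : ℝ) (ha : 0 ≤ a) (hb : 0 ≤ b) :
    Real.sqrt (a + b) ≤ Real.sqrt a + Real.sqrt b := by
  have h1 : a + b ≤ (Real.sqrt a + Real.sqrt b) ^ 2 := by
    nlinarith only [Real.sq_sqrt ha, Real.sq_sqrt hb, Real.sqrt_nonneg a, Real.sqrt_nonneg b,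
      mul_nonneg (Real.sqrt_nonneg a) (Real.sqrt_nonneg b)]
  calc Real.sqrt (a + b) ≤ Real.sqrt ((Real.sqrt a + Real.sqrt b) ^ 2) := Real.sqrt_le_sqrt h1
    _ = Real.sqrt a + Real.sqrt b := Real.sqrt_sq (by positivity)

/-- Core algebraic estimate for the subadditivity `γ(1) < c₀ + γ(0)`. -/
lemma my_subadd_core {A Tw Tu w u : ℝ} (hw0 : 0 < w) (hu : 0 < u)
    (hwsq : w ^ 2 = 1 + u ^ 2) (hTw : 0 < Tw)
    (k1 : Tw < w * A) (k2 : u * Tw < w * Tu) :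
    w * Tw < A + u * Tu := by
  nlinarith only [hw0, hu, hwsq, hTw, k1, k2, mul_lt_mul_of_pos_left k2 hu]

/-- Core algebraic estimate for the slope bound `γ(a+1) - γ(a) < c₀`. -/
lemma my_slope_core {Ts Tt s t c P Q : ℝ}
    (hs0 : 0 < s) (hst : s < t) (hts1 : t - s < 1)
    (k1 : s * Tt < t * Ts) (k2 : Ts < s * c ^ 2) (k3 : Tt < t * c ^ 2)
    (hc : 0 < c)
    (hP : P ^ 2 = s * Ts) (hQ : Q ^ 2 = t * Tt)
    (hPpos : 0 < P) (hQnn : 0 ≤ Q) : Q < P + c := by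
  have ht0 : (0:ℝ) < t := by linarith
  have hPlt : P < c * s := by
    apply lt_of_pow_lt_pow_left₀ 2 (mul_pos hc hs0).le
    nlinarith only [hP, mul_lt_mul_of_pos_left k2 hs0]
  have hQlt : Q < c * t := by
    apply lt_of_pow_lt_pow_left₀ 2 (mul_pos hc ht0).le
    nlinarith only [hQ, mul_lt_mul_of_pos_left k3 ht0]
  have hTsle : Ts ≤ c * P := by
    nlinarith only [hP, mul_le_mul_of_nonneg_right hPlt.le hPpos.le, hs0]
  have hTtle : Tt ≤ c * Q := by
    nlinarith only [hQ, mul_le_mul_of_nonneg_right hQlt.le hQnn, ht0]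
  have hPQ : 0 < P + Q := by linarith
  have hcP : 0 < c * P := mul_pos hc hPpos
  have hcQ : 0 ≤ c * Q := mul_nonneg hc.le hQnn
  have m2 : (t - s) * Ts ≤ (t - s) * (c * P) :=
    mul_le_mul_of_nonneg_left hTsle (by linarith)
  have m3 : (t - s) * Tt ≤ (t - s) * (c * Q) :=
    mul_le_mul_of_nonneg_left hTtle (by linarith)
  have key2 : Q ^ 2 - P ^ 2 < c * (P + Q) := by
    nlinarith only [k1, m2, m3, hP, hQ, hts1, hcP, hcQ]
  nlinarith only [key2, hPQ]

set_option maxHeartbeats 1000000 in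
/-- If `β* ∈ (0,3)` solves the resonance condition `F(β*,h) = 0`, then with
`c₀ = tanh(h)^{1/2}`, `γ(k) = (k²+β*)^{1/4} tanh(h(k²+β*)^{1/2})^{1/2}` and
`σ = c₀ − γ(1)`, the only integer `k` with `c₀k − γ(k) = σ` is `k = 1`, and the only
integer `k` with `c₀k + γ(k) = σ` is `k = −2`. -/
theorem stmt11 (h : ℝ) (hh : 0 < h) (βs : ℝ) (hβ1 : 0 < βs) (hβ2 : βs < 3)
    (hroot : F βs h = 0) :
    let c₀ : ℝ := Real.sqrt (Real.tanh h)
    let γ : ℝ → ℝ := fun k =>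
      (k ^ 2 + βs) ^ ((1 : ℝ) / 4) * Real.sqrt (Real.tanh (h * Real.sqrt (k ^ 2 + βs)))
    let σ : ℝ := c₀ - γ 1
    {k : ℤ | c₀ * (k : ℝ) - γ (k : ℝ) = σ} = {1} ∧
    {k : ℤ | c₀ * (k : ℝ) + γ (k : ℝ) = σ} = {-2} := by
  intro c₀ γ σ
  have hc₀def : c₀ = Real.sqrt (Real.tanh h) := rfl
  have hσdef : σ = c₀ - γ 1 := rfl
  have hγdef : γ = (fun k : ℝ =>
      (k ^ 2 + βs) ^ ((1 : ℝ) / 4) * Real.sqrt (Real.tanh (h * Real.sqrt (k ^ 2 + βs)))) := rfl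
  clear_value c₀ γ σ
  have htanh : 0 < Real.tanh h := my_tanh_pos hh
  have hc₀pos : 0 < c₀ := by rw [hc₀def]; exact Real.sqrt_pos.2 htanh
  have hc₀sq : c₀ ^ 2 = Real.tanh h := by rw [hc₀def]; exact Real.sq_sqrt htanh.le
  -- rewriting γ
  have hquarter : ∀ x : ℝ, 0 ≤ x → x ^ ((1:ℝ)/4) = Real.sqrt (Real.sqrt x) := by
    intro x hx
    rw [show (1:ℝ)/4 = (1/2) * (1/2) by norm_num, Real.rpow_mul hx,
      ← Real.sqrt_eq_rpow, ← Real.sqrt_eq_rpow]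
  have hG : ∀ y : ℝ, 0 ≤ y → y ^ ((1:ℝ)/4) * Real.sqrt (Real.tanh (h * Real.sqrt y))
      = Real.sqrt (Real.sqrt y * Real.tanh (h * Real.sqrt y)) := by
    intro y hy
    rw [hquarter y hy, ← Real.sqrt_mul (Real.sqrt_nonneg _)]
  have harg : ∀ x y : ℝ, x ^ 2 + βs = y →
      γ x = y ^ ((1:ℝ)/4) * Real.sqrt (Real.tanh (h * Real.sqrt y)) := by
    intro x y hxy
    simp only [hγdef]
    rw [hxy]
  -- star inequalities
  have star : ∀ t : ℝ, 1 < t → Real.tanh (h * t) < t * Real.tanh h := by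
    intro t ht
    have h1 := my_tanh_star hh (show h < h * t by nlinarith only [hh, ht])
    nlinarith only [h1, hh, ht]
  have star2 : ∀ s t : ℝ, 0 < s → s < t →
      s * Real.tanh (h * t) < t * Real.tanh (h * s) := by
    intro s t hs hst
    have h1 := my_tanh_star (mul_pos hh hs) (show h * s < h * t by nlinarith only [hh, hs, hst])
    nlinarith only [h1, hh, hs, hst]
  have mlt : ∀ a b : ℝ, 0 ≤ a → a < b →
      a * Real.tanh (h * a) < b * Real.tanh (h * b) := by
    intro a b ha hab
    have hb : 0 < b := lt_of_le_of_lt ha hab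
    have h2' : 0 < Real.tanh (h * b) := my_tanh_pos (mul_pos hh hb)
    rcases eq_or_lt_of_le ha with heq | ha'
    · rw [← heq]
      simpa using mul_pos hb h2'
    · have h1 : Real.tanh (h * a) < Real.tanh (h * b) :=
        my_tanh_strict_mono (by nlinarith only [hh, ha', hab])
      have h2 : 0 < Real.tanh (h * a) := my_tanh_pos (mul_pos hh ha')
      nlinarith only [h1, h2, h2', ha', hab]
  -- special values
  set u0 := Real.sqrt βs with hu0
  set w1 := Real.sqrt (1 + βs) with hw1
  have hu0pos : 0 < u0 := Real.sqrt_pos.2 hβ1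
  have hu0sq : u0 ^ 2 = βs := Real.sq_sqrt hβ1.le
  have hw1sq : w1 ^ 2 = 1 + βs := Real.sq_sqrt (by linarith)
  have hw1nonneg : 0 ≤ w1 := Real.sqrt_nonneg _
  have hw1gt : 1 < w1 := by
    apply lt_of_pow_lt_pow_left₀ 2 hw1nonneg
    rw [hw1sq]
    nlinarith only [hβ1]
  have hw1pos : 0 < w1 := by linarith
  have hu0w1 : u0 < w1 := by
    rw [hu0, hw1]; exact Real.sqrt_lt_sqrt hβ1.le (by linarith)
  have g0eq : γ 0 = Real.sqrt (u0 * Real.tanh (h * u0)) := by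
    rw [harg 0 βs (by ring), hG βs hβ1.le, hu0]
  have g1eq : γ 1 = Real.sqrt (w1 * Real.tanh (h * w1)) := by
    rw [harg 1 (1 + βs) (by norm_num), hG (1 + βs) (by linarith), hw1]
  have hγeven : ∀ x : ℝ, γ (-x) = γ x := by
    intro x
    rw [harg (-x) (x ^ 2 + βs) (by ring), harg x (x ^ 2 + βs) rfl]
  have hγ0le : ∀ x : ℝ, γ 0 ≤ γ x := by
    intro x
    rw [g0eq, harg x (x ^ 2 + βs) rfl, hG _ (add_nonneg (sq_nonneg x) hβ1.le)]
    apply Real.sqrt_le_sqrt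
    have h1 : u0 ≤ Real.sqrt (x ^ 2 + βs) := by
      rw [hu0]; exact Real.sqrt_le_sqrt (by linarith only [sq_nonneg x])
    rcases eq_or_lt_of_le h1 with heq | hlt
    · exact le_of_eq (by rw [heq])
    · exact (mlt u0 _ hu0pos.le hlt).le
  have hTu0 : 0 < Real.tanh (h * u0) := my_tanh_pos (mul_pos hh hu0pos)
  have hTw1 : 0 < Real.tanh (h * w1) := my_tanh_pos (mul_pos hh hw1pos)
  have hγ0pos : 0 < γ 0 := by
    rw [g0eq]; exact Real.sqrt_pos.2 (mul_pos hu0pos hTu0)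
  -- root condition
  have hsum : γ 1 + γ 2 = 3 * c₀ := by
    have h1 : γ 1 = (1 + βs) ^ ((1:ℝ)/4) * Real.sqrt (Real.tanh (h * Real.sqrt (1 + βs))) :=
      harg 1 (1 + βs) (by norm_num)
    have h2 : γ 2 = (4 + βs) ^ ((1:ℝ)/4) * Real.sqrt (Real.tanh (h * Real.sqrt (4 + βs))) :=
      harg 2 (4 + βs) (by norm_num)
    have hF : F βs h = 3 * Real.sqrt (Real.tanh h)
        - (1 + βs) ^ ((1:ℝ)/4) * Real.sqrt (Real.tanh (h * Real.sqrt (1 + βs)))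
        - (4 + βs) ^ ((1:ℝ)/4) * Real.sqrt (Real.tanh (h * Real.sqrt (4 + βs))) := rfl
    rw [hF] at hroot
    rw [h1, h2, hc₀def]
    linarith
  -- σ < 0
  have hg1gt : c₀ < γ 1 := by
    rw [hc₀def, g1eq]
    apply Real.sqrt_lt_sqrt htanh.le
    have h1 : Real.tanh h < Real.tanh (h * w1) :=
      my_tanh_strict_mono (by nlinarith only [hh, hw1gt])
    nlinarith only [h1, hTw1, hw1gt]
  -- subadditivity : γ 1 < c₀ + γ 0
  have hkey : w1 * Real.tanh (h * w1) < Real.tanh h + u0 * Real.tanh (h * u0) := by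
    have k1 : Real.tanh (h * w1) < w1 * Real.tanh h := star w1 hw1gt
    have k2 : u0 * Real.tanh (h * w1) < w1 * Real.tanh (h * u0) := star2 u0 w1 hu0pos hu0w1
    exact my_subadd_core hw1pos hu0pos (by rw [hw1sq, hu0sq]) hTw1 k1 k2
  have hsub : γ 1 < c₀ + γ 0 := by
    rw [g1eq, hc₀def, g0eq]
    calc Real.sqrt (w1 * Real.tanh (h * w1))
        < Real.sqrt (Real.tanh h + u0 * Real.tanh (h * u0)) :=
          Real.sqrt_lt_sqrt (mul_nonneg hw1pos.le hTw1.le) hkey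
      _ ≤ Real.sqrt (Real.tanh h) + Real.sqrt (u0 * Real.tanh (h * u0)) :=
          my_sqrt_add_le _ _ htanh.le (mul_nonneg hu0pos.le hTu0.le)
  -- slope inequality
  have hslope : ∀ a : ℝ, 1 ≤ a → γ (a + 1) < γ a + c₀ := by
    intro a ha
    have ha0 : 0 < a := by linarith
    set s := Real.sqrt (a ^ 2 + βs) with hs
    set t := Real.sqrt ((a + 1) ^ 2 + βs) with ht
    have hs_sq : s ^ 2 = a ^ 2 + βs := Real.sq_sqrt (add_nonneg (sq_nonneg a) hβ1.le)
    have ht_sq : t ^ 2 = (a + 1) ^ 2 + βs := Real.sq_sqrt (add_nonneg (sq_nonneg (a+1)) hβ1.le)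
    have hs_nonneg : 0 ≤ s := Real.sqrt_nonneg _
    have ht_nonneg : 0 ≤ t := Real.sqrt_nonneg _
    have hs1 : 1 < s := by
      apply lt_of_pow_lt_pow_left₀ 2 hs_nonneg
      rw [hs_sq]
      nlinarith only [hβ1, ha]
    have hs0 : (0:ℝ) < s := by linarith
    have hst : s < t := by
      apply lt_of_pow_lt_pow_left₀ 2 ht_nonneg
      rw [hs_sq, ht_sq]
      nlinarith only [ha0]
    have ht0 : (0:ℝ) < t := by linarith
    have ht1 : 1 < t := by linarith
    have hsa : a < s := by
      apply lt_of_pow_lt_pow_left₀ 2 hs_nonneg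
      rw [hs_sq]
      nlinarith only [hβ1]
    have hta : a + 1 < t := by
      apply lt_of_pow_lt_pow_left₀ 2 ht_nonneg
      rw [ht_sq]
      nlinarith only [hβ1]
    have hts1 : t - s < 1 := by
      nlinarith only [hs_sq, ht_sq, hsa, hta, hs_nonneg, ht_nonneg]
    have hTs : 0 < Real.tanh (h * s) := my_tanh_pos (mul_pos hh hs0)
    have hTt : 0 < Real.tanh (h * t) := my_tanh_pos (mul_pos hh ht0)
    have k1 : s * Real.tanh (h * t) < t * Real.tanh (h * s) := star2 s t hs0 hst
    have k2 : Real.tanh (h * s) < s * c₀ ^ 2 := by rw [hc₀sq]; exact star s hs1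
    have k3 : Real.tanh (h * t) < t * c₀ ^ 2 := by rw [hc₀sq]; exact star t ht1
    have ga : γ a = Real.sqrt (s * Real.tanh (h * s)) := by
      rw [harg a (a ^ 2 + βs) rfl, hG _ (add_nonneg (sq_nonneg a) hβ1.le), hs]
    have gb : γ (a + 1) = Real.sqrt (t * Real.tanh (h * t)) := by
      rw [harg (a + 1) ((a + 1) ^ 2 + βs) rfl, hG _ (add_nonneg (sq_nonneg (a+1)) hβ1.le), ht]
    have hga_sq : (γ a) ^ 2 = s * Real.tanh (h * s) := by
      rw [ga]; exact Real.sq_sqrt (mul_nonneg hs0.le hTs.le)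
    have hgb_sq : (γ (a + 1)) ^ 2 = t * Real.tanh (h * t) := by
      rw [gb]; exact Real.sq_sqrt (mul_nonneg ht0.le hTt.le)
    have hga_pos : 0 < γ a := by
      rw [ga]; exact Real.sqrt_pos.2 (mul_pos hs0 hTs)
    have hgb_nonneg : 0 ≤ γ (a + 1) := by rw [gb]; exact Real.sqrt_nonneg _
    have := my_slope_core hs0 hst hts1 k1 k2 k3 hc₀pos hga_sq hgb_sq hga_pos hgb_nonneg
    linarith
  -- strict monotonicity of the discrete dispersion branch
  have hD : StrictMono (fun n : ℕ => c₀ * ((n:ℝ) + 1) - γ ((n:ℝ) + 1)) := by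
    apply strictMono_nat_of_lt_succ
    intro n
    have h0n : (0:ℝ) ≤ (n:ℝ) := Nat.cast_nonneg n
    have h2 := hslope ((n:ℝ) + 1) (by linarith)
    push_cast
    linarith
  constructor
  · ext k
    simp only [Set.mem_setOf_eq, Set.mem_singleton_iff]
    constructor
    · intro hk
      rcases le_or_gt 1 k with hge | hlt
      · have hnz : ((k - 1).toNat : ℤ) = k - 1 := Int.toNat_of_nonneg (by omega)
        have hkn : (k:ℝ) = (((k - 1).toNat : ℕ) : ℝ) + 1 := by
          have hkk : k = ((k - 1).toNat : ℤ) + 1 := by omega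
          exact_mod_cast hkk
        have hn0 : (k - 1).toNat = 0 := by
          apply hD.injective
          show c₀ * ((((k - 1).toNat : ℕ) : ℝ) + 1) - γ ((((k - 1).toNat : ℕ) : ℝ) + 1)
              = c₀ * (((0:ℕ) : ℝ) + 1) - γ (((0:ℕ) : ℝ) + 1)
          rw [← hkn, hk, hσdef]
          norm_num
        omega
      · exfalso
        have hk0 : (k:ℝ) ≤ 0 := by exact_mod_cast (show k ≤ 0 by omega)
        have h1 : γ 0 ≤ γ (k:ℝ) := hγ0le _
        have h2 : c₀ * (k:ℝ) ≤ 0 := mul_nonpos_iff.2 (Or.inl ⟨hc₀pos.le, hk0⟩)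
        rw [hσdef] at hk
        linarith
    · rintro rfl
      rw [hσdef]
      push_cast
      ring_nf
  · ext k
    simp only [Set.mem_setOf_eq, Set.mem_singleton_iff]
    constructor
    · intro hk
      rcases le_or_gt 0 k with hge | hlt
      · exfalso
        have hk0 : (0:ℝ) ≤ (k:ℝ) := by exact_mod_cast hge
        have h1 : γ 0 ≤ γ (k:ℝ) := hγ0le _
        have h2 : 0 ≤ c₀ * (k:ℝ) := mul_nonneg hc₀pos.le hk0
        rw [hσdef] at hk
        linarith
      · have hnz : ((-k - 1).toNat : ℤ) = -k - 1 := Int.toNat_of_nonneg (by omega)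
        have hkn : (k:ℝ) = -((((-k - 1).toNat : ℕ) : ℝ) + 1) := by
          have hkk : k = -(((-k - 1).toNat : ℤ) + 1) := by omega
          exact_mod_cast hkk
        have hn1 : (-k - 1).toNat = 1 := by
          apply hD.injective
          show c₀ * ((((-k - 1).toNat : ℕ) : ℝ) + 1) - γ ((((-k - 1).toNat : ℕ) : ℝ) + 1)
              = c₀ * (((1:ℕ) : ℝ) + 1) - γ (((1:ℕ) : ℝ) + 1)
          rw [hσdef, hkn, hγeven] at hk
          have e12 : γ (((1:ℕ) : ℝ) + 1) = γ 2 := by norm_num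
          rw [e12]
          push_cast
          linarith [hsum, hk]
        omega
    · rintro rfl
      rw [hσdef]
      push_cast
      rw [hγeven 2]
      linarith [hsum]
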